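/- Let N ≥ 3 and ε > 0 small. There is a constant C > 0, independent of ε, such that for all x, y ∈ Ω_ε one has |H_ε(x,y) − H(x,y) − H_{ε,1}(x,y)| ≤ C ε^{N−2} (|x|^{2−N} + |y|^{2−N}). -/

import Mathlib

open MeasureTheory Metric Set Filter
open scoped ENNReal

noncomputable section

/-- Second derivative of `f` at `x` in directions `v`, `w`. -/
def D2 {N : ℕ} (f : EuclideanSpace ℝ (Fin N) → ℝ) (x v w : EuclideanSpace ℝ (Fin N)) : ℝ :=
  fderiv ℝ (fun y => fderiv ℝ f y v) x w

/-- The Laplacian of `f : ℝ^N → ℝ`. -/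
def lap {N : ℕ} (f : EuclideanSpace ℝ (Fin N) → ℝ) (x : EuclideanSpace ℝ (Fin N)) : ℝ :=
  ∑ i : Fin N, D2 f x (EuclideanSpace.single i 1) (EuclideanSpace.single i 1)

/-- `γ_N = [(N−2)|S^{N−1}|]⁻¹`, where `|S^{N-1}| = N·vol(B(0,1))` is the surface measure of
the unit sphere. -/
def gammaN (N : ℕ) : ℝ :=
  (((N : ℝ) - 2) * (N * (volume (ball (0 : EuclideanSpace ℝ (Fin N)) 1)).toReal))⁻¹

/-- The defining property of the regular part `H_D` of the Green's function of `−Δ` in a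
domain `D`: for each `y ∈ D`, `x ↦ H_D(x,y)` is harmonic in `D`, continuous up to the
boundary, and equals `γ_N|x−y|^{2−N}` on `∂D`. -/
def IsRegularPart (N : ℕ) (D : Set (EuclideanSpace ℝ (Fin N)))
    (H : EuclideanSpace ℝ (Fin N) → EuclideanSpace ℝ (Fin N) → ℝ) : Prop :=
  ∀ y ∈ D, ContinuousOn (fun x => H x y) (closure D) ∧
    ContDiffOn ℝ 2 (fun x => H x y) D ∧
    (∀ x ∈ D, lap (fun z => H z y) x = 0) ∧
    (∀ x ∈ frontier D, H x y = gammaN N * ‖x - y‖ ^ ((2 : ℝ) - N))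

/-! The difference `u = H_ε(·, y) − H(·, y) − H_{ε,1}(·, y)` is harmonic in `Ω_ε`. On `∂Ω` the
first two terms cancel, and `H_{ε,1}(·, y) ≲ ε^{N-2}|y|^{2-N}` there because its pole `ε²y/|y|²`
lies in `B(0, ε)`. On `|x| = ε` the first and the last term cancel by Kelvin's identity
`|y| |x − ε²y/|y|²| = ε |x − y|`, and `0 ≤ H(·, y) ≤ C` because `H` is bounded near the interior
point `0`. So `|u| ≤ C ε^{N-2}(|x|^{2-N} + |y|^{2-N})` on `∂Ω_ε`, and as the right-hand side is
harmonic too, the maximum principle extends the bound to `Ω_ε`. The maximum principle comes from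
perturbing by `δ|x|²`: the Laplacian of `u + δ|x|²` is `2Nδ > 0`, while at an interior maximum
every second derivative along a line is `≤ 0`. -/

open Topology InnerProductSpace Laplacian
open scoped RealInnerProductSpace

theorem IsLocalMax.deriv_deriv_nonpos {g : ℝ → ℝ} {a : ℝ} (hmax : IsLocalMax g a)
    (hc : ContinuousAt g a) : deriv (deriv g) a ≤ 0 := by
  by_contra! hpos
  have hconst : g =ᶠ[𝓝 a] fun _ => g a := by
    filter_upwards [hmax, isLocalMin_of_deriv_deriv_pos hpos hmax.deriv_eq_zero hc]
      with t h₁ h₂ using le_antisymm h₁ h₂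
  have : deriv (deriv g) a = 0 := by
    rw [hconst.deriv.deriv_eq]
    simp
  linarith

theorem deriv_deriv_quadratic_rpow {a : ℝ} (ha : 0 < a) (b s : ℝ) :
    deriv (deriv fun t : ℝ => (a + 2 * b * t + t ^ 2) ^ s) 0 =
      4 * s * (s - 1) * b ^ 2 * a ^ (s - 2) + 2 * s * a ^ (s - 1) := by
  set q : ℝ → ℝ := fun t => a + 2 * b * t + t ^ 2 with hq
  have hq' : ∀ t, HasDerivAt q (2 * b + 2 * t) t := fun t =>
    ((((hasDerivAt_id t).const_mul (2 * b)).const_add a).add (hasDerivAt_pow 2 t)).congr_deriv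
      (by simp)
  have hq0 : q 0 ≠ 0 := by simpa [hq] using ha.ne'
  have hfirst : (deriv fun t => q t ^ s) =ᶠ[𝓝 0]
      fun t => (2 * b + 2 * t) * s * q t ^ (s - 1) := by
    filter_upwards [(hq' 0).continuousAt.eventually_ne hq0] with t ht
    exact ((hq' t).rpow_const (Or.inl ht)).deriv
  have hsecond := (((hasDerivAt_id (0 : ℝ)).const_mul 2).const_add (2 * b) |>.mul_const s).mul
    ((hq' 0).rpow_const (p := s - 1) (Or.inl hq0))
  rw [hfirst.deriv_eq]
  refine hsecond.deriv.trans ?_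
  simp only [hq, id, mul_zero, add_zero, ne_eq, OfNat.ofNat_ne_zero, not_false_eq_true,
    zero_pow, show s - 1 - 1 = s - 2 by ring]
  ring

section Line

variable {F : Type*} [NormedAddCommGroup F] [NormedSpace ℝ F]

theorem hasDerivAt_add_smul (x v : F) (s : ℝ) : HasDerivAt (fun t : ℝ => x + t • v) v s := by
  simpa using ((hasDerivAt_id s).smul_const v).const_add x

theorem iteratedFDeriv_two_apply_self_eq_deriv_deriv {f : F → ℝ} {x : F}
    (hf : ContDiffAt ℝ 2 f x) (v : F) :
    iteratedFDeriv ℝ 2 f x ![v, v] = deriv (deriv fun t : ℝ => f (x + t • v)) 0 := by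
  have hx : x + (0 : ℝ) • v = x := by simp
  have hfirst : (deriv fun t : ℝ => f (x + t • v)) =ᶠ[𝓝 0]
      fun t => fderiv ℝ f (x + t • v) v := by
    have hdiff : ∀ᶠ y in 𝓝 x, DifferentiableAt ℝ f y :=
      (hf.eventually (by simp)).mono fun y hy => hy.differentiableAt (by simp)
    have hcont : Tendsto (fun t : ℝ => x + t • v) (𝓝 0) (𝓝 x) := by
      simpa [hx] using (hasDerivAt_add_smul x v 0).continuousAt.tendsto
    filter_upwards [hcont.eventually hdiff] with t ht
    exact (ht.hasFDerivAt.comp_hasDerivAt t (hasDerivAt_add_smul x v t)).deriv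
  have hsecond : HasDerivAt (fun t : ℝ => fderiv ℝ f (x + t • v) v)
      (fderiv ℝ (fderiv ℝ f) x v v) 0 := by
    have h₂ : HasFDerivAt (fderiv ℝ f) (fderiv ℝ (fderiv ℝ f) x) (x + (0 : ℝ) • v) := by
      rw [hx]
      exact ((hf.fderiv_right (m := 1) (by norm_num)).differentiableAt (by simp)).hasFDerivAt
    exact (ContinuousLinearMap.apply ℝ ℝ v).hasFDerivAt.comp_hasDerivAt (0 : ℝ)
      (h₂.comp_hasDerivAt (0 : ℝ) (hasDerivAt_add_smul x v 0))
  rw [hfirst.deriv_eq, hsecond.deriv, iteratedFDeriv_two_apply]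
  rfl

end Line

section Laplacian

variable {E : Type*} [NormedAddCommGroup E] [InnerProductSpace ℝ E] [FiniteDimensional ℝ E]

theorem laplacian_eq_sum_deriv_deriv {ι : Type*} [Fintype ι] {f : E → ℝ} {x : E}
    (hf : ContDiffAt ℝ 2 f x) (b : OrthonormalBasis ι ℝ E) :
    Δ f x = ∑ i, deriv (deriv fun t : ℝ => f (x + t • b i)) 0 := by
  simp only [laplacian_eq_iteratedFDeriv_orthonormalBasis f b,
    iteratedFDeriv_two_apply_self_eq_deriv_deriv hf]

theorem IsLocalMax.laplacian_nonpos {f : E → ℝ} {x : E} (hmax : IsLocalMax f x)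
    (hf : ContDiffAt ℝ 2 f x) : Δ f x ≤ 0 := by
  rw [laplacian_eq_sum_deriv_deriv hf (stdOrthonormalBasis ℝ E)]
  refine Finset.sum_nonpos fun i _ => IsLocalMax.deriv_deriv_nonpos ?_ ?_
  · exact IsLocalMax.comp_continuous (g := fun t : ℝ => x + t • stdOrthonormalBasis ℝ E i)
      (by simpa using hmax) (hasDerivAt_add_smul x _ 0).continuousAt
  · exact hf.continuousAt.comp_of_eq (hasDerivAt_add_smul x _ 0).continuousAt (by simp)

theorem laplacian_norm_sq (x : E) :
    Δ (fun z : E => ‖z‖ ^ 2) x = 2 * Module.finrank ℝ E := by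
  set b := stdOrthonormalBasis ℝ E
  have hline : ∀ i, (fun t : ℝ => ‖x + t • b i‖ ^ 2) =
      fun t => ‖x‖ ^ 2 + 2 * ⟪x, b i⟫ * t + t ^ 2 := by
    intro i; ext t
    rw [norm_add_sq_real, norm_smul, b.orthonormal.1 i, inner_smul_right]
    simp; ring
  have hquad : ∀ a c : ℝ, deriv (deriv fun t : ℝ => a + c * t + t ^ 2) 0 = 2 := by
    intro a c
    have hd : deriv (fun t : ℝ => a + c * t + t ^ 2) = fun t => c + 2 * t := by
      ext t
      exact (((hasDerivAt_id t).const_mul c).const_add a |>.add (hasDerivAt_pow 2 t)).deriv.trans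
        (by simp)
    rw [hd]
    exact (((hasDerivAt_id (0 : ℝ)).const_mul 2).const_add c).deriv.trans (by simp)
  rw [laplacian_eq_sum_deriv_deriv (contDiff_norm_sq ℝ).contDiffAt b]
  simp only [hline, hquad, Finset.sum_const, Finset.card_univ, Fintype.card_fin, nsmul_eq_mul]
  ring

theorem laplacian_norm_sub_rpow {c x : E} (hx : x ≠ c) (p : ℝ) :
    Δ (fun z => ‖z - c‖ ^ p) x = p * (p + Module.finrank ℝ E - 2) * ‖x - c‖ ^ (p - 2) := by
  set b := stdOrthonormalBasis ℝ E
  have hw : 0 < ‖x - c‖ := norm_pos_iff.2 (sub_ne_zero.2 hx)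
  have hf : ContDiffAt ℝ 2 (fun z => ‖z - c‖ ^ p) x :=
    ((contDiffAt_id.sub contDiffAt_const).norm ℝ (sub_ne_zero.2 hx)).rpow_const_of_ne hw.ne'
  have hline : ∀ i, (fun t : ℝ => ‖x + t • b i - c‖ ^ p) =
      fun t => (‖x - c‖ ^ 2 + 2 * ⟪x - c, b i⟫ * t + t ^ 2) ^ (p / 2) := by
    intro i; ext t
    have : ‖x - c‖ ^ 2 + 2 * ⟪x - c, b i⟫ * t + t ^ 2 = ‖x + t • b i - c‖ ^ 2 := by
      rw [show x + t • b i - c = (x - c) + t • b i by abel, norm_add_sq_real, norm_smul,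
        b.orthonormal.1 i, inner_smul_right]
      simp; ring
    rw [this, Real.rpow_div_two_eq_sqrt _ (sq_nonneg _), Real.sqrt_sq (norm_nonneg _)]
  have h₁ : (‖x - c‖ ^ 2) ^ (p / 2 - 1) = ‖x - c‖ ^ (p - 2) := by
    rw [show p / 2 - 1 = (p - 2) / 2 by ring, Real.rpow_div_two_eq_sqrt _ (sq_nonneg _),
      Real.sqrt_sq hw.le]
  have h₂ : ‖x - c‖ ^ 2 * (‖x - c‖ ^ 2) ^ (p / 2 - 2) = ‖x - c‖ ^ (p - 2) := by
    rw [← h₁, show p / 2 - 1 = (p / 2 - 2) + 1 by ring, Real.rpow_add_one (by positivity)]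
    ring
  rw [laplacian_eq_sum_deriv_deriv hf b]
  simp only [hline, deriv_deriv_quadratic_rpow (pow_pos hw 2), Finset.sum_add_distrib,
    ← Finset.sum_mul, ← Finset.mul_sum, b.sum_sq_inner_left, Finset.sum_const, Finset.card_univ,
    Fintype.card_fin, nsmul_eq_mul]
  linear_combination (p * (p - 2)) * h₂ + (p * Module.finrank ℝ E) * h₁

theorem harmonicOnNhd_norm_sub_rpow (c : E) :
    HarmonicOnNhd (fun z => ‖z - c‖ ^ (2 - Module.finrank ℝ E : ℝ)) {c}ᶜ := by
  intro x hx
  refine ⟨((contDiffAt_id.sub contDiffAt_const).norm ℝ (sub_ne_zero.2 hx)).rpow_const_of_ne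
    (norm_ne_zero_iff.2 (sub_ne_zero.2 hx)), ?_⟩
  filter_upwards [isOpen_compl_singleton.mem_nhds hx] with y hy
  rw [laplacian_norm_sub_rpow hy]
  simp

theorem InnerProductSpace.HarmonicAt.not_isLocalMax_add_smul_norm_sq [Nontrivial E] {u : E → ℝ}
    {x : E} (hu : HarmonicAt u x) {δ : ℝ} (hδ : 0 < δ) :
    ¬IsLocalMax (u + δ • fun z => ‖z‖ ^ 2) x := by
  intro hmax
  set v : E → ℝ := u + δ • fun z => ‖z‖ ^ 2 with hv
  have hsq : ContDiffAt ℝ 2 (fun z : E => ‖z‖ ^ 2) x := (contDiff_norm_sq ℝ).contDiffAt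
  have hδsq : ContDiffAt ℝ 2 (δ • fun z : E => ‖z‖ ^ 2) x := hsq.const_smul δ
  have hlap : Δ v x = δ * (2 * Module.finrank ℝ E) := by
    rw [hv, hu.1.laplacian_add hδsq, laplacian_smul δ hsq, hu.2.self_of_nhds, laplacian_norm_sq]
    simp
  have hdim : (0 : ℝ) < Module.finrank ℝ E := by exact_mod_cast Module.finrank_pos
  have := hmax.laplacian_nonpos (hu.1.add hδsq)
  nlinarith

theorem InnerProductSpace.HarmonicOnNhd.nonpos_of_forall_mem_frontier_nonpos [Nontrivial E]
    {u : E → ℝ} {U : Set E} (hU : IsOpen U) (hb : Bornology.IsBounded U)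
    (hu : HarmonicOnNhd u U) (hc : ContinuousOn u (closure U))
    (hfr : ∀ z ∈ frontier U, u z ≤ 0) {x : E} (hx : x ∈ U) : u x ≤ 0 := by
  obtain ⟨C, hC⟩ := hb.closure.exists_norm_le
  have hle : ∀ δ > 0, u x ≤ δ * C ^ 2 := by
    intro δ hδ
    obtain ⟨z, hz, hmax⟩ := hb.isCompact_closure.exists_isMaxOn ⟨x, subset_closure hx⟩
      (hc.add ((contDiff_norm_sq ℝ (n := 2)).continuous.continuousOn.const_smul δ))
    have hzU : z ∉ U := fun hzU => (hu z hzU).not_isLocalMax_add_smul_norm_sq hδ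
      (hmax.isLocalMax (mem_of_superset (hU.mem_nhds hzU) subset_closure))
    have hzC : ‖z‖ ^ 2 ≤ C ^ 2 := pow_le_pow_left₀ (norm_nonneg z) (hC z hz) 2
    have hz0 := hfr z (by rw [hU.frontier_eq]; exact ⟨hz, hzU⟩)
    have hxz : u x + δ * ‖x‖ ^ 2 ≤ u z + δ * ‖z‖ ^ 2 := hmax (subset_closure hx)
    nlinarith [sq_nonneg ‖x‖]
  refine le_of_forall_pos_le_add fun η hη => ?_
  have := hle (η / (C ^ 2 + 1)) (by positivity)
  have : η / (C ^ 2 + 1) * C ^ 2 ≤ η := by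
    rw [div_mul_eq_mul_div, div_le_iff₀ (by positivity)]
    nlinarith
  linarith

theorem InnerProductSpace.HarmonicOnNhd.le_of_forall_mem_frontier_le [Nontrivial E]
    {u v : E → ℝ} {U : Set E} (hU : IsOpen U) (hb : Bornology.IsBounded U)
    (hu : HarmonicOnNhd u U) (hv : HarmonicOnNhd v U) (huc : ContinuousOn u (closure U))
    (hvc : ContinuousOn v (closure U)) (hfr : ∀ z ∈ frontier U, u z ≤ v z) {x : E}
    (hx : x ∈ U) : u x ≤ v x :=
  sub_nonpos.1 <| (hu.sub hv).nonpos_of_forall_mem_frontier_nonpos hU hb (huc.sub hvc)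
    (fun z hz => sub_nonpos.2 (hfr z hz)) hx

theorem InnerProductSpace.HarmonicOnNhd.abs_sub_le_of_forall_mem_frontier [Nontrivial E]
    {u v w : E → ℝ} {U : Set E} (hU : IsOpen U) (hb : Bornology.IsBounded U)
    (hu : HarmonicOnNhd u U) (hv : HarmonicOnNhd v U) (hw : HarmonicOnNhd w U)
    (huc : ContinuousOn u (closure U)) (hvc : ContinuousOn v (closure U))
    (hwc : ContinuousOn w (closure U)) (hfr : ∀ z ∈ frontier U, |u z - v z| ≤ w z) {x : E}
    (hx : x ∈ U) : |u x - v x| ≤ w x := by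
  rw [abs_sub_le_iff, sub_le_iff_le_add, sub_le_iff_le_add]
  exact ⟨hu.le_of_forall_mem_frontier_le hU hb (hw.add hv) huc (hwc.add hvc)
      (fun z hz => sub_le_iff_le_add.1 (abs_sub_le_iff.1 (hfr z hz)).1) hx,
    hv.le_of_forall_mem_frontier_le hU hb (hw.add hu) hvc (hwc.add huc)
      (fun z hz => sub_le_iff_le_add.1 (abs_sub_le_iff.1 (hfr z hz)).2) hx⟩

end Laplacian

theorem norm_smul_sub_inversion_of_norm_eq {E : Type*} [NormedAddCommGroup E]
    [InnerProductSpace ℝ E] {ε : ℝ} (hε : 0 < ε) {y z : E} (hy : y ≠ 0) (hz : ‖z‖ = ε) :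
    ‖‖y‖ • (z - (ε ^ 2 / ‖y‖ ^ 2) • y)‖ = ε * ‖z - y‖ := by
  have h := EuclideanGeometry.dist_inversion_inversion (c := (0 : E)) (R := ε)
    (norm_pos_iff.1 (hz ▸ hε)) hy
  rw [EuclideanGeometry.inversion_of_mem_sphere (mem_sphere_zero_iff_norm.2 hz)] at h
  simp only [EuclideanGeometry.inversion, vsub_eq_sub, sub_zero, vadd_eq_add, add_zero,
    dist_eq_norm, hz, div_pow] at h
  have hy' : 0 < ‖y‖ := norm_pos_iff.2 hy
  rw [norm_smul, norm_norm, h]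
  field_simp

theorem frontier_diff_closedBall_subset {F : Type*} [NormedAddCommGroup F] [NormedSpace ℝ F]
    (s : Set F) (a : F) {r : ℝ} (hr : r ≠ 0) :
    frontier (s \ closedBall a r) ⊆ frontier s ∪ sphere a r := by
  have := frontier_inter_subset s (closedBall a r)ᶜ
  rw [frontier_compl, frontier_closedBall a hr] at this
  exact this.trans (union_subset_union inter_subset_left inter_subset_right)

theorem closure_diff_closedBall_subset {F : Type*} [PseudoMetricSpace F] (s : Set F) (a : F)
    (r : ℝ) : closure (s \ closedBall a r) ⊆ closure s ∩ (ball a r)ᶜ :=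
  closure_minimal (sdiff_subset_sdiff subset_closure ball_subset_closedBall)
    (isClosed_closure.inter isOpen_ball.isClosed_compl)

theorem lap_eq_laplacian {N : ℕ} {f : EuclideanSpace ℝ (Fin N) → ℝ}
    {x : EuclideanSpace ℝ (Fin N)} (hf : ContDiffAt ℝ 2 f x) : lap f x = Δ f x := by
  have hdiff : DifferentiableAt ℝ (fderiv ℝ f) x :=
    (hf.fderiv_right (m := 1) (by norm_num)).differentiableAt (by simp)
  rw [laplacian_eq_iteratedFDeriv_orthonormalBasis f (EuclideanSpace.basisFun (Fin N) ℝ), lap]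
  refine Finset.sum_congr rfl fun i _ => ?_
  rw [D2, fderiv_clm_apply hdiff (differentiableAt_const _), iteratedFDeriv_two_apply]
  simp

section RegularPart

variable {N : ℕ} {D : Set (EuclideanSpace ℝ (Fin N))}
  {H : EuclideanSpace ℝ (Fin N) → EuclideanSpace ℝ (Fin N) → ℝ} {x y : EuclideanSpace ℝ (Fin N)}

def fundamentalSolution (N : ℕ) (x : EuclideanSpace ℝ (Fin N)) : ℝ :=
  gammaN N * ‖x‖ ^ ((2 : ℝ) - N)

theorem gammaN_pos (hN : 3 ≤ N) : 0 < gammaN N := by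
  have : (0 : ℝ) < N - 2 := by
    have : (3 : ℝ) ≤ N := by exact_mod_cast hN
    linarith
  have hvol : 0 < (volume (ball (0 : EuclideanSpace ℝ (Fin N)) 1)).toReal :=
    ENNReal.toReal_pos (measure_ball_pos volume 0 one_pos).ne' measure_ball_lt_top.ne
  unfold gammaN
  positivity

theorem fundamentalSolution_le_of_le_norm (hN : 3 ≤ N) {r : ℝ} (hr : 0 < r) (hx : r ≤ ‖x‖) :
    fundamentalSolution N x ≤ gammaN N * r ^ ((2 : ℝ) - N) := by
  have : (3 : ℝ) ≤ N := by exact_mod_cast hN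
  exact mul_le_mul_of_nonneg_left (Real.rpow_le_rpow_of_nonpos hr hx (by linarith))
    (gammaN_pos hN).le

theorem harmonicOnNhd_fundamentalSolution_sub (y : EuclideanSpace ℝ (Fin N)) :
    HarmonicOnNhd (fun x => fundamentalSolution N (x - y)) {y}ᶜ := by
  have := (harmonicOnNhd_norm_sub_rpow y).const_smul (c := gammaN N)
  simp only [finrank_euclideanSpace_fin] at this
  exact this

theorem harmonicOnNhd_mul_norm_rpow_add (a b : ℝ) :
    HarmonicOnNhd (fun x : EuclideanSpace ℝ (Fin N) => a * (‖x‖ ^ ((2 : ℝ) - N) + b)) {0}ᶜ := by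
  have := ((harmonicOnNhd_norm_sub_rpow (0 : EuclideanSpace ℝ (Fin N))).const_smul
    (c := a)).add (harmonicOnNhd_const (a * b))
  convert this using 2
  simp
  ring

theorem IsRegularPart.harmonicOnNhd (hD : IsOpen D) (hH : IsRegularPart N D H) (hy : y ∈ D) :
    HarmonicOnNhd (fun x => H x y) D := fun x hx =>
  ⟨(hH y hy).2.1.contDiffAt (hD.mem_nhds hx), by
    filter_upwards [hD.mem_nhds hx] with z hz
    rw [← lap_eq_laplacian ((hH y hy).2.1.contDiffAt (hD.mem_nhds hz))]
    exact (hH y hy).2.2.1 z hz⟩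

theorem IsRegularPart.nonneg (hN : 3 ≤ N) (hD : IsOpen D) (hb : Bornology.IsBounded D)
    (hH : IsRegularPart N D H) (hy : y ∈ D) (hx : x ∈ D) : 0 ≤ H x y := by
  have : NeZero N := ⟨by omega⟩
  refine (harmonicOnNhd_const 0).le_of_forall_mem_frontier_le hD hb (hH.harmonicOnNhd hD hy)
    continuousOn_const (hH y hy).1 (fun z hz => ?_) hx
  rw [(hH y hy).2.2.2 z hz]
  exact mul_nonneg (gammaN_pos hN).le (Real.rpow_nonneg (norm_nonneg _) _)

theorem IsRegularPart.le_fundamentalSolution (hN : 3 ≤ N) (hD : IsOpen D)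
    (hb : Bornology.IsBounded D) (hH : IsRegularPart N D H) (hy : y ∈ D) (hx : x ∈ D)
    (hxy : x ≠ y) : H x y ≤ fundamentalSolution N (x - y) := by
  have : NeZero N := ⟨by omega⟩
  obtain ⟨hc, -, -, hbd⟩ := hH y hy
  -- `H(·, y)` is bounded near `y` while the fundamental solution blows up there, so the maximum
  -- principle applies on `D` minus a small ball around `y`
  obtain ⟨r₀, hr₀, hK⟩ : ∃ r₀ > 0, ∀ z ∈ ball y r₀, H z y < H y y + 1 :=
    eventually_nhds_iff_ball.1 <| (hc.continuousAt (mem_of_superset (hD.mem_nhds hy)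
      subset_closure)).eventually_lt continuousAt_const (lt_add_one _)
  have hblow : Tendsto (fun r : ℝ => gammaN N * r ^ ((2 : ℝ) - N)) (𝓝[>] 0) atTop := by
    have : (2 : ℝ) - N < 0 := by
      have : (3 : ℝ) ≤ N := by exact_mod_cast hN
      linarith
    exact (tendsto_rpow_neg_nhdsGT_zero this).const_mul_atTop (gammaN_pos hN)
  obtain ⟨r, hrK, hrr₀, hrx, hr : 0 < r⟩ := (hblow.eventually_ge_atTop (H y y + 1) |>.and <|
    ((eventually_lt_nhds hr₀).filter_mono nhdsWithin_le_nhds).and <|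
    ((eventually_lt_nhds (dist_pos.2 hxy)).filter_mono nhdsWithin_le_nhds).and
      self_mem_nhdsWithin).exists
  have hcl := closure_diff_closedBall_subset D y r
  have hney : ∀ z ∈ closure (D \ closedBall y r), z ∈ ({y}ᶜ : Set _) := fun z hz hzy =>
    (hcl hz).2 (by rw [hzy]; exact mem_ball_self hr)
  refine ((hH.harmonicOnNhd hD hy).mono sdiff_subset).le_of_forall_mem_frontier_le
    (hD.sdiff isClosed_closedBall) (hb.subset sdiff_subset)
    ((harmonicOnNhd_fundamentalSolution_sub y).mono fun z hz => hney z (subset_closure hz))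
    (hc.mono fun z hz => (hcl hz).1)
    ((harmonicOnNhd_fundamentalSolution_sub y).contDiffOn.continuousOn.mono hney) ?_
    ⟨hx, by simpa using hrx⟩
  intro z hz
  rcases frontier_diff_closedBall_subset D y hr.ne' hz with hz | hz
  · exact (hbd z hz).le
  · have hzr : ‖z - y‖ = r := by rw [← dist_eq_norm]; exact hz
    calc H z y ≤ H y y + 1 := (hK z (sphere_subset_ball hrr₀ hz)).le
      _ ≤ gammaN N * r ^ ((2 : ℝ) - N) := hrK
      _ = fundamentalSolution N (z - y) := by rw [fundamentalSolution, hzr]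

theorem IsRegularPart.le_of_closedBall_subset (hN : 3 ≤ N) (hD : IsOpen D)
    (hb : Bornology.IsBounded D) (hH : IsRegularPart N D H) (hy : y ∈ D) {r : ℝ} (hr : 0 < r)
    (hball : closedBall x r ⊆ D) : H x y ≤ gammaN N * (r / 2) ^ ((2 : ℝ) - N) := by
  have : NeZero N := ⟨by omega⟩
  have hfar : ∀ z ∈ D, r / 2 ≤ ‖z - y‖ → H z y ≤ gammaN N * (r / 2) ^ ((2 : ℝ) - N) :=
    fun z hz hzy => (hH.le_fundamentalSolution hN hD hb hy hz
      (sub_ne_zero.1 (norm_pos_iff.1 (by linarith)))).trans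
      (fundamentalSolution_le_of_le_norm hN (by positivity) hzy)
  by_cases hxy : r / 2 ≤ ‖x - y‖
  · exact hfar x (hball (mem_closedBall_self hr.le)) hxy
  -- otherwise `y` lies well inside `B(x, r)`, so `H(·, y)` is bounded on the sphere `∂B(x, r)`
  refine HarmonicOnNhd.le_of_forall_mem_frontier_le isOpen_ball isBounded_ball
    ((hH.harmonicOnNhd hD hy).mono (ball_subset_closedBall.trans hball)) (harmonicOnNhd_const _)
    ((hH y hy).1.mono (closure_ball_subset_closedBall.trans (hball.trans subset_closure)))
    continuousOn_const (fun z hz => ?_) (mem_ball_self hr)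
  rw [frontier_ball x hr.ne'] at hz
  refine hfar z (hball (sphere_subset_closedBall hz)) ?_
  have := norm_sub_norm_le (z - x) (y - x)
  rw [sub_sub_sub_cancel_right, ← dist_eq_norm, mem_sphere.1 hz, norm_sub_rev] at this
  linarith

/-- `H_{ε,1}(x, y)`, the regular part for the exterior domain `ℝ^N ∖ closure B(0, ε)`. -/
def exteriorRegularPart (N : ℕ) (ε : ℝ) (x y : EuclideanSpace ℝ (Fin N)) : ℝ :=
  gammaN N * ε ^ ((N : ℝ) - 2) * ‖(‖y‖ : ℝ) • (x - (ε ^ 2 / ‖y‖ ^ 2) • y)‖ ^ ((2 : ℝ) - N)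

theorem exteriorRegularPart_eq_mul_fundamentalSolution (ε : ℝ) (x y : EuclideanSpace ℝ (Fin N)) :
    exteriorRegularPart N ε x y = ε ^ ((N : ℝ) - 2) * ‖y‖ ^ ((2 : ℝ) - N) *
      fundamentalSolution N (x - (ε ^ 2 / ‖y‖ ^ 2) • y) := by
  rw [exteriorRegularPart, fundamentalSolution, norm_smul, norm_norm,
    Real.mul_rpow (norm_nonneg _) (norm_nonneg _)]
  ring

theorem exteriorRegularPart_eq_of_norm_eq {ε : ℝ} (hε : 0 < ε) (hy : y ≠ 0) (hx : ‖x‖ = ε) :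
    exteriorRegularPart N ε x y = fundamentalSolution N (x - y) := by
  rw [exteriorRegularPart, fundamentalSolution, norm_smul_sub_inversion_of_norm_eq hε hy hx,
    Real.mul_rpow hε.le (norm_nonneg _), mul_assoc, ← mul_assoc (ε ^ _), ← Real.rpow_add hε]
  simp

theorem norm_inversion_lt {ε : ℝ} (hε : 0 < ε) (hy : ε < ‖y‖) :
    ‖(ε ^ 2 / ‖y‖ ^ 2) • y‖ < ε := by
  have hy' : 0 < ‖y‖ := hε.trans hy
  rw [norm_smul, Real.norm_of_nonneg (by positivity), div_mul_eq_mul_div,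
    div_lt_iff₀ (by positivity)]
  nlinarith [mul_pos (mul_pos hε hy') (sub_pos.2 hy)]

theorem harmonicOnNhd_exteriorRegularPart {ε : ℝ} (hε : 0 < ε) (hy : ε < ‖y‖) :
    HarmonicOnNhd (fun x => exteriorRegularPart N ε x y) (ball 0 ε)ᶜ := by
  simp only [exteriorRegularPart_eq_mul_fundamentalSolution]
  refine ((harmonicOnNhd_fundamentalSolution_sub _).const_smul
    (c := ε ^ ((N : ℝ) - 2) * ‖y‖ ^ ((2 : ℝ) - N))).mono fun x hx hxc => hx ?_
  rw [mem_singleton_iff.1 hxc, mem_ball_zero_iff]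
  exact norm_inversion_lt hε hy

theorem exteriorRegularPart_le (hN : 3 ≤ N) {ε r : ℝ} (hε : 0 < ε) (hy : ε < ‖y‖) (hr : 0 < r)
    (hx : r + ε ≤ ‖x‖) : exteriorRegularPart N ε x y ≤
      ε ^ ((N : ℝ) - 2) * ‖y‖ ^ ((2 : ℝ) - N) * (gammaN N * r ^ ((2 : ℝ) - N)) := by
  rw [exteriorRegularPart_eq_mul_fundamentalSolution]
  refine mul_le_mul_of_nonneg_left (fundamentalSolution_le_of_le_norm hN hr ?_) (by positivity)
  have := norm_sub_norm_le x ((ε ^ 2 / ‖y‖ ^ 2) • y)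
  linarith [norm_inversion_lt hε hy]

theorem IsRegularPart.abs_sub_exteriorRegularPart_le_on_frontier (hN : 3 ≤ N)
    (hD : IsOpen D) (hb : Bornology.IsBounded D) (hH : IsRegularPart N D H) {R ε C : ℝ}
    (hR : closedBall 0 R ⊆ D) (hε : 0 < ε) (hεR : ε < R / 2)
    (hC₂ : gammaN N * (R / 2) ^ ((2 : ℝ) - N) ≤ C) (hC₄ : gammaN N * (R / 4) ^ ((2 : ℝ) - N) ≤ C)
    (hy : y ∈ D \ closedBall 0 ε) {z : EuclideanSpace ℝ (Fin N)}
    (hz : z ∈ frontier (D \ closedBall 0 ε)) :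
    |fundamentalSolution N (z - y) - (H z y + exteriorRegularPart N ε z y)| ≤
      C * ε ^ ((N : ℝ) - 2) * (‖z‖ ^ ((2 : ℝ) - N) + ‖y‖ ^ ((2 : ℝ) - N)) := by
  have hyε : ε < ‖y‖ := by simpa using hy.2
  have hγ := gammaN_pos hN
  have hR0 : 0 < R := by linarith
  have hC : 0 ≤ C := le_trans (by positivity) hC₂
  rcases frontier_diff_closedBall_subset D 0 hε.ne' hz with hz | hz
  · have hzR : R ≤ ‖z‖ := by
      by_contra! h
      exact (hD.frontier_eq ▸ hz).2 (hR (mem_closedBall_zero_iff.2 h.le))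
    have hext₀ : 0 ≤ exteriorRegularPart N ε z y := by unfold exteriorRegularPart; positivity
    rw [(hH y hy.1).2.2.2 z hz, fundamentalSolution, sub_add_cancel_left, abs_neg,
      abs_of_nonneg hext₀]
    calc exteriorRegularPart N ε z y
        ≤ ε ^ ((N : ℝ) - 2) * ‖y‖ ^ ((2 : ℝ) - N) * (gammaN N * (R / 2) ^ ((2 : ℝ) - N)) :=
          exteriorRegularPart_le hN hε hyε (half_pos hR0) (by linarith)
      _ ≤ ε ^ ((N : ℝ) - 2) * ‖y‖ ^ ((2 : ℝ) - N) * C := by gcongr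
      _ ≤ C * ε ^ ((N : ℝ) - 2) * (‖z‖ ^ ((2 : ℝ) - N) + ‖y‖ ^ ((2 : ℝ) - N)) := by
          have : 0 ≤ C * ε ^ ((N : ℝ) - 2) * ‖z‖ ^ ((2 : ℝ) - N) := by positivity
          linarith
  · have hzε : ‖z‖ = ε := by simpa using hz
    have hHz := hH.le_of_closedBall_subset hN hD hb hy.1 (half_pos hR0) (x := z)
      fun w hw => hR <| mem_closedBall_zero_iff.2 <| by
        linarith [norm_le_norm_add_norm_sub' w z, mem_closedBall_iff_norm.1 hw]
    have hH₀ := hH.nonneg hN hD hb hy.1 (hR (mem_closedBall_zero_iff.2 (by linarith)))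
    rw [exteriorRegularPart_eq_of_norm_eq hε (norm_pos_iff.1 (hε.trans hyε)) hzε,
      sub_add_cancel_right, abs_neg, abs_of_nonneg hH₀]
    have hδ : ε ^ ((N : ℝ) - 2) * ‖z‖ ^ ((2 : ℝ) - N) = 1 := by
      rw [hzε, ← Real.rpow_add hε]
      simp
    rw [show R / 2 / 2 = R / 4 by ring] at hHz
    calc H z y ≤ gammaN N * (R / 4) ^ ((2 : ℝ) - N) := hHz
      _ ≤ C := hC₄
      _ ≤ C * ε ^ ((N : ℝ) - 2) * (‖z‖ ^ ((2 : ℝ) - N) + ‖y‖ ^ ((2 : ℝ) - N)) := by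
          rw [mul_assoc, mul_add, hδ]
          exact le_mul_of_one_le_right hC (le_add_of_nonneg_right (by positivity))

end RegularPart

/-- Let `N ≥ 3` and `ε > 0` small. There is a constant `C > 0`,
independent of `ε`, such that for all `x, y ∈ Ω_ε`,
`|H_ε(x,y) − H(x,y) − H_{ε,1}(x,y)| ≤ C ε^{N−2}(|x|^{2−N} + |y|^{2−N})`, where
`H_{ε,1}(x,y) = γ_N ε^{N−2} ||y|(x − ε²y/|y|²)|^{2−N}` is the regular part of the Green's
function of the exterior domain `ℝ^N ∖ closure B(0,ε)`. -/
theorem stmt_1 (N : ℕ) (hN : 3 ≤ N)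
    (Ω : Set (EuclideanSpace ℝ (Fin N))) (hΩo : IsOpen Ω) (hΩb : Bornology.IsBounded Ω)
    (h0 : 0 ∈ Ω)
    (H : EuclideanSpace ℝ (Fin N) → EuclideanSpace ℝ (Fin N) → ℝ)
    (hH : IsRegularPart N Ω H) :
    ∃ ε₀ : ℝ, 0 < ε₀ ∧ ∃ C : ℝ, 0 < C ∧
      ∀ ε : ℝ, 0 < ε → ε < ε₀ →
        ∀ Hε : EuclideanSpace ℝ (Fin N) → EuclideanSpace ℝ (Fin N) → ℝ,
          IsRegularPart N (Ω \ closedBall 0 ε) Hε →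
          ∀ x y : EuclideanSpace ℝ (Fin N),
            x ∈ Ω \ closedBall 0 ε → y ∈ Ω \ closedBall 0 ε →
            |Hε x y - H x y -
                gammaN N * ε ^ ((N : ℝ) - 2) *
                  ‖(‖y‖ : ℝ) • (x - (ε ^ 2 / ‖y‖ ^ 2) • y)‖ ^ ((2 : ℝ) - N)| ≤
              C * ε ^ ((N : ℝ) - 2) * (‖x‖ ^ ((2 : ℝ) - N) + ‖y‖ ^ ((2 : ℝ) - N)) := by
  have : NeZero N := ⟨by omega⟩
  have hγ := gammaN_pos hN
  obtain ⟨R, hR, hRΩ⟩ := nhds_basis_closedBall.mem_iff.1 (hΩo.mem_nhds h0)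
  set C := gammaN N * (R / 2) ^ ((2 : ℝ) - N) + gammaN N * (R / 4) ^ ((2 : ℝ) - N)
  refine ⟨R / 2, half_pos hR, C, by positivity, fun ε hε hεR Hε hHε x y hx hy => ?_⟩
  have hyε : ε < ‖y‖ := by simpa using hy.2
  have hU : IsOpen (Ω \ closedBall 0 ε) := hΩo.sdiff isClosed_closedBall
  have hcl := closure_diff_closedBall_subset Ω 0 ε
  have hout : Ω \ closedBall 0 ε ⊆ (ball 0 ε)ᶜ := fun z hz => (hcl (subset_closure hz)).2
  have hext := harmonicOnNhd_exteriorRegularPart hε hyε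
  have hw := (harmonicOnNhd_mul_norm_rpow_add (N := N) (C * ε ^ ((N : ℝ) - 2))
    (‖y‖ ^ ((2 : ℝ) - N))).mono (compl_subset_compl.2 (singleton_subset_iff.2 (mem_ball_self hε)))
  rw [sub_sub]
  exact HarmonicOnNhd.abs_sub_le_of_forall_mem_frontier hU (hΩb.subset sdiff_subset)
    (hHε.harmonicOnNhd hU hy)
    (((hH.harmonicOnNhd hΩo hy.1).mono sdiff_subset).add (hext.mono hout)) (hw.mono hout)
    (hHε y hy).1 (((hH y hy.1).1.mono fun z hz => (hcl hz).1).add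
      (hext.contDiffOn.continuousOn.mono fun z hz => (hcl hz).2))
    (hw.contDiffOn.continuousOn.mono fun z hz => (hcl hz).2)
    (fun z hz => by
      rw [(hHε y hy).2.2.2 z hz]
      exact hH.abs_sub_exteriorRegularPart_le_on_frontier hN hΩo hΩb hRΩ hε hεR
        (le_add_of_nonneg_right (by positivity)) (le_add_of_nonneg_left (by positivity)) hy hz) hx
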